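/- arXiv:1605.06755 — 4 statements merged into one kernel-verified Lean document; each statement's English description precedes it below -/
import Mathlib

section
/- Two continuous maps f, g : P → Q between finite T₀ spaces are homotopic if and only if there exist m ≥ 0 and a continuous map H : P × J_m → Q with H(·,0) = f and H(·,m) = g, where J_m is the finite fence 0 < 1 > 2 < ⋯ m with the Alexandrov topology. -/
open Set

/-- The finite fence poset `0 < 1 > 2 < ⋯ m` on `m+1` points. -/
def J (m : ℕ) : Type := Fin (m + 1)

namespace J

/-- The underlying natural number of a point of the fence. -/
def val {m : ℕ} (i : J m) : ℕ := @Fin.val (m + 1) i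

instance (m : ℕ) : PartialOrder (J m) where
  le i j := i.val = j.val ∨ (j.val % 2 = 1 ∧ (j.val = i.val + 1 ∨ i.val = j.val + 1))
  le_refl i := Or.inl rfl
  le_trans a b c h₁ h₂ := by
    show a.val = c.val ∨ (c.val % 2 = 1 ∧ (c.val = a.val + 1 ∨ a.val = c.val + 1))
    rcases h₁ with h₁ | h₁ <;> rcases h₂ with h₂ | h₂ <;> omega
  le_antisymm a b h₁ h₂ := by
    have : a.val = b.val := by rcases h₁ with h₁ | h₁ <;> rcases h₂ with h₂ | h₂ <;> omega
    exact @Fin.val_injective (m + 1) a b this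

instance (m : ℕ) : Finite (J m) := inferInstanceAs (Finite (Fin (m + 1)))

/-- The initial point `0` of the fence. -/
def zero {m : ℕ} : J m := (0 : Fin (m + 1))

/-- The terminal point `m` of the fence. -/
def last {m : ℕ} : J m := Fin.last m

end J

/-- The Alexandrov topology on a preordered set: open sets are the lower sets (ideals). -/
def alexTop (α : Type*) [Preorder α] : TopologicalSpace α where
  IsOpen s := IsLowerSet s
  isOpen_univ := isLowerSet_univ
  isOpen_inter _ _ := IsLowerSet.inter
  isOpen_sUnion _ := isLowerSet_sUnion

instance (m : ℕ) : TopologicalSpace (J m) := alexTop (J m)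

/-- `P × P` can be covered by `n` open sets, each admitting a continuous section of
`q_m : P^{J_m} → P × P`, `γ ↦ (γ(0), γ(m))`. -/
def hasCCCover (P : Type*) [TopologicalSpace P] (m n : ℕ) : Prop :=
  ∃ U : Fin n → Set (P × P), (∀ i, IsOpen (U i)) ∧ (⋃ i, U i) = Set.univ ∧
    ∀ i, ∃ s : C(U i, C(J m, P)),
      ∀ x : U i, (s x) J.zero = (x : P × P).1 ∧ (s x) J.last = (x : P × P).2

/-- The combinatorial complexity at length `m`. -/
noncomputable def CCm (P : Type*) [TopologicalSpace P] (m : ℕ) : ℕ∞ :=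
  sInf ((↑) '' {n : ℕ | hasCCCover P m n})

/-- The combinatorial complexity `CC(P) = min_m CC_m(P)`. -/
noncomputable def CC (P : Type*) [TopologicalSpace P] : ℕ∞ := ⨅ m, CCm P m

/-- `X × X` can be covered by `n` open sets, each admitting a continuous section of the
path fibration `X^I → X × X`. -/
def hasTCCover (X : Type*) [TopologicalSpace X] (n : ℕ) : Prop :=
  ∃ U : Fin n → Set (X × X), (∀ i, IsOpen (U i)) ∧ (⋃ i, U i) = Set.univ ∧
    ∀ i, ∃ s : C(U i, C(unitInterval, X)),
      ∀ x : U i, (s x) 0 = (x : X × X).1 ∧ (s x) 1 = (x : X × X).2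

/-- Farber's topological complexity. -/
noncomputable def topComplexity (X : Type*) [TopologicalSpace X] : ℕ∞ :=
  sInf ((↑) '' {n : ℕ | hasTCCover X n})

/-- A subset is contractible in the ambient space when its inclusion is null-homotopic. -/
def ContractibleIn {X : Type*} [TopologicalSpace X] (A : Set X) : Prop :=
  ∃ x₀ : X, ContinuousMap.Homotopic ⟨Subtype.val, continuous_subtype_val⟩
    (ContinuousMap.const A x₀)

/-- The (unreduced) Lusternik–Schnirelmann category. -/
noncomputable def cat (X : Type*) [TopologicalSpace X] : ℕ∞ :=
  sInf ((↑) '' {n : ℕ | ∃ U : Fin n → Set X, (∀ i, IsOpen (U i)) ∧ (⋃ i, U i) = Set.univ ∧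
    ∀ i, ContractibleIn (U i)})

/-!
Along a homotopy `F`, the maps `F t` are locally comparable: since `P` is finite and `Iic y` is
the smallest neighbourhood of `y` in `Q`, every `t` has a neighbourhood on which `F s ≤ F t`
pointwise. Connectedness of `[0, 1]` then puts `f` and `g` in one class of the equivalence
relation generated by the pointwise order, i.e. they are joined by a zigzag
`f ≤ k₁ ≥ k₂ ≤ ⋯ g`, and a zigzag is exactly a monotone map `J_m → C(P, Q)`, which
uncurries to a continuous map on `P × J_m`. Conversely, comparable points of an Alexandrov
space are joined by a path, so `J_m` is path-connected and a path from `0` to `m` turns `H`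
into a homotopy.
-/

open Filter Topology Relation

theorem Specializes.joined {X : Type*} [TopologicalSpace X] {x y : X} (h : x ⤳ y) :
    Joined x y :=
  joinedIn_univ.1 (h.joinedIn (mem_univ x) (mem_univ y))

def IsFence {α : Type*} [Preorder α] (s : ℕ → α) (m : ℕ) : Prop :=
  ∀ i < m, if i % 2 = 0 then s i ≤ s (i + 1) else s (i + 1) ≤ s i

theorem IsFence.snoc {α : Type*} [Preorder α] {s : ℕ → α} {m : ℕ} (hs : IsFence s m)
    (hm : m % 2 = 0) {t c : α} (hst : s m ≤ t) (hct : c ≤ t) :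
    IsFence (fun i => if i ≤ m then s i else if i = m + 1 then t else c) (m + 2) := by
  intro i hi
  rcases lt_trichotomy i m with hlt | rfl | hgt
  · simpa only [if_pos hlt.le, if_pos (Nat.succ_le_of_lt hlt)] using hs i hlt
  · simpa [hm] using hst
  · obtain rfl : i = m + 1 := by omega
    simpa [Nat.succ_mod_two_eq_one_iff.2 hm] using hct

theorem exists_isFence_of_eqvGen {α : Type*} [Preorder α] {a b : α}
    (h : EqvGen (· ≤ ·) a b) :
    ∃ m s, m % 2 = 0 ∧ IsFence s m ∧ s 0 = a ∧ s m = b := by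
  -- with even length, a comparability `b ≤ c` or `c ≤ b` extends the fence by `b ≤ t ≥ c`
  rw [← EqvGen.reflTransGen_symmGen] at h
  induction h with
  | refl => exact ⟨0, fun _ => a, rfl, fun i hi => absurd hi (Nat.not_lt_zero i), rfl, rfl⟩
  | @tail b c _ hbc ih =>
    obtain ⟨m, s, hm, hs, hs0, hsm⟩ := ih
    obtain ⟨t, hbt, hct⟩ : ∃ t, b ≤ t ∧ c ≤ t := hbc.elim (fun h => ⟨c, h, le_rfl⟩)
      (fun h => ⟨b, le_rfl, h⟩)
    subst hsm
    refine ⟨m + 2, _, by omega, hs.snoc hm hbt hct, by simpa using hs0, by simp⟩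

namespace J

variable {m : ℕ}

theorem le_iff {i j : J m} :
    i ≤ j ↔ i.val = j.val ∨ (j.val % 2 = 1 ∧ (j.val = i.val + 1 ∨ i.val = j.val + 1)) :=
  Iff.rfl

theorem ext {i j : J m} (h : i.val = j.val) : i = j :=
  @Fin.val_injective (m + 1) i j h

@[simp] theorem val_zero : (J.zero : J m).val = 0 := rfl

@[simp] theorem val_last : (J.last : J m).val = m := rfl

def ofNat (m i : ℕ) : J m := (⟨min i m, Nat.lt_succ_of_le (min_le_right i m)⟩ : Fin (m + 1))

@[simp] theorem val_ofNat (i : ℕ) : (ofNat m i).val = min i m := rfl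

@[simp] theorem ofNat_zero : ofNat m 0 = J.zero := ext (by simp)

@[simp] theorem ofNat_self : ofNat m m = J.last := ext (by simp)

instance : Topology.IsLowerSet (J m) := ⟨rfl⟩

theorem ofNat_le_succ_or_succ_le (i : ℕ) :
    ofNat m i ≤ ofNat m (i + 1) ∨ ofNat m (i + 1) ≤ ofNat m i := by
  simp only [le_iff, val_ofNat]
  omega

theorem joined_zero_last (m : ℕ) : Joined (J.zero : J m) J.last := by
  have joined_ofNat : ∀ i, Joined J.zero (ofNat m i) := by
    intro i
    induction i with
    | zero => simpa using Joined.refl _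
    | succ i ih =>
      refine ih.trans ?_
      rcases ofNat_le_succ_or_succ_le (m := m) i with h | h
      · exact (Topology.IsLowerSet.specializes_iff_le.2 h).joined
      · exact (Topology.IsLowerSet.specializes_iff_le.2 h).joined.symm
  simpa using joined_ofNat m

theorem monotone_comp_val {α : Type*} [Preorder α] {s : ℕ → α} (hs : IsFence s m) :
    Monotone fun j : J m => s j.val := by
  intro i j hij
  have hj : j.val ≤ m := Nat.le_of_lt_succ (@Fin.isLt (m + 1) j)
  have hi : i.val ≤ m := Nat.le_of_lt_succ (@Fin.isLt (m + 1) i)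
  rcases le_iff.1 hij with h | ⟨hodd, h | h⟩
  · simp only [h, le_rfl]
  · simpa [h, show i.val % 2 = 0 by omega] using hs i.val (by omega)
  · simpa [h, hodd] using hs j.val (by omega)

theorem exists_monotone_of_eqvGen {α : Type*} [Preorder α] {a b : α}
    (h : EqvGen (· ≤ ·) a b) :
    ∃ (m : ℕ) (k : J m → α), Monotone k ∧ k J.zero = a ∧ k J.last = b := by
  obtain ⟨m, s, -, hs, hs0, hsm⟩ := exists_isFence_of_eqvGen h
  exact ⟨m, fun j => s j.val, monotone_comp_val hs, by simpa using hs0, by simpa using hsm⟩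

end J

theorem Topology.IsLowerSet.isOpen_Iic {α : Type*} [Preorder α] [TopologicalSpace α]
    [Topology.IsLowerSet α] (a : α) : IsOpen (Iic a) :=
  isOpen_iff_isLowerSet.2 (isLowerSet_Iic a)

section LowerSetTopology

variable {X Y Q : Type*} [TopologicalSpace X] [TopologicalSpace Y]
  [PartialOrder Q] [TopologicalSpace Q] [Topology.IsLowerSet Q]

theorem ContinuousMap.isOpen_Iic [Finite X] (f : C(X, Q)) : IsOpen (Iic f) := by
  have : Iic f = ⋂ x, (fun g : C(X, Q) => g x) ⁻¹' Iic (f x) := by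
    ext g
    simp [ContinuousMap.le_def]
  rw [this]
  exact isOpen_iInter_of_finite fun x =>
    (continuous_eval_const x).isOpen_preimage _ (Topology.IsLowerSet.isOpen_Iic (f x))

theorem ContinuousMap.Homotopic.eqvGen_le [Finite X] {f g : C(X, Q)} (h : f.Homotopic g) :
    EqvGen (· ≤ ·) f g := by
  obtain ⟨F⟩ := h
  have locally_le : ∀ s, ∀ᶠ t in 𝓝 s, F.curry t ≤ F.curry s := fun s =>
    F.curry.continuous.continuousAt ((F.curry s).isOpen_Iic.mem_nhds self_mem_Iic)
  have := PreconnectedSpace.induction₂' (fun s t => EqvGen (· ≤ ·) (F.curry s) (F.curry t))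
    (fun s => (locally_le s).mono fun t ht => ⟨.symm _ _ (.rel _ _ ht), .rel _ _ ht⟩)
    ⟨fun _ _ _ => .trans _ _ _⟩ 0 1
  simpa using this

theorem Monotone.continuous_uncurry {J : Type*} [Preorder J] [Finite J] [TopologicalSpace J]
    [Topology.IsLowerSet J] {k : J → C(X, Q)} (hk : Monotone k) :
    Continuous fun x : X × J => k x.2 x.1 := by
  rw [continuous_iff_continuousAt]
  rintro ⟨x, j⟩
  have locally_le : ∀ᶠ y in 𝓝 x, ∀ i, k i y ≤ k i x := eventually_all.2 fun i =>
    (k i).continuous.continuousAt ((Topology.IsLowerSet.isOpen_Iic (k i x)).mem_nhds self_mem_Iic)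
  rw [ContinuousAt, nhds_prod_eq, Topology.IsLowerSet.nhds_eq_principal_Iic j,
    Topology.IsLowerSet.nhds_eq_principal_Iic (k j x), tendsto_principal]
  filter_upwards [locally_le.prod_mk (mem_principal_self (Iic j))]
  rintro ⟨y, i⟩ ⟨hy, hij⟩
  exact (hy i).trans (hk hij x)

theorem ContinuousMap.homotopic_of_joined {Z : Type*} [TopologicalSpace Z] (H : C(X × Y, Z))
    {y₀ y₁ : Y} (h : Joined y₀ y₁) {f g : C(X, Z)} (hf : ∀ x, H (x, y₀) = f x)
    (hg : ∀ x, H (x, y₁) = g x) : f.Homotopic g := by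
  obtain ⟨γ⟩ := h
  exact ⟨{ toFun := fun tx => H (tx.2, γ tx.1)
           map_zero_left := by simp [hf]
           map_one_left := by simp [hg] }⟩

end LowerSetTopology

theorem homotopic_iff_fence_homotopy_general
    (P Q : Type) [PartialOrder Q] [Finite P]
    [TopologicalSpace P] [TopologicalSpace Q]
    (hQ : ∀ s : Set Q, IsOpen s ↔ IsLowerSet s)
    (f g : C(P, Q)) :
    ContinuousMap.Homotopic f g ↔
      ∃ (m : ℕ) (H : C(P × J m, Q)),
        (∀ p : P, H (p, J.zero) = f p) ∧ (∀ p : P, H (p, J.last) = g p) := by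
  have : Topology.IsLowerSet Q := ⟨TopologicalSpace.ext (funext fun s => propext (hQ s))⟩
  constructor
  · intro h
    obtain ⟨m, k, hk, hk0, hkm⟩ := J.exists_monotone_of_eqvGen h.eqvGen_le
    exact ⟨m, ⟨_, hk.continuous_uncurry⟩, fun p => by simp [hk0], fun p => by simp [hkm]⟩
  · rintro ⟨m, H, hH0, hHm⟩
    exact H.homotopic_of_joined (J.joined_zero_last m) hH0 hHm

/-- Two continuous maps `f g : P → Q` between finite spaces are homotopic iff
there are `m ≥ 0` and a continuous `H : P × J_m → Q` with `H(·,0) = f` and `H(·,m) = g`. -/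
theorem homotopic_iff_fence_homotopy
    (P Q : Type) [PartialOrder P] [PartialOrder Q] [Finite P] [Finite Q]
    [TopologicalSpace P] [TopologicalSpace Q]
    (hP : ∀ s : Set P, IsOpen s ↔ IsLowerSet s)
    (hQ : ∀ s : Set Q, IsOpen s ↔ IsLowerSet s)
    (f g : C(P, Q)) :
    ContinuousMap.Homotopic f g ↔
      ∃ (m : ℕ) (H : C(P × J m, Q)),
        (∀ p : P, H (p, J.zero) = f p) ∧ (∀ p : P, H (p, J.last) = g p) :=
  homotopic_iff_fence_homotopy_general P Q hQ f g
end

section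
/- For any finite T₀ space P, the Lusternik–Schnirelmann category of P is at most the number of maximal elements of P: cat(P) ≤ #Max(P). In particular the prime ideals U_x = {y ≤ x} for x maximal form a contractible open cover of P. -/
open Set

open Topology

theorem Finite.exists_le_isMax {α : Type*} [Preorder α] [Finite α] (a : α) :
    ∃ b, a ≤ b ∧ IsMax b := by
  obtain ⟨b, hab, hb⟩ := Finite.exists_le_maximal (p := fun _ : α => True) trivial
  exact ⟨b, hab, fun _ => hb.2 trivial⟩

theorem Finite.iUnion_Iic_isMax_eq_univ (α : Type*) [Preorder α] [Finite α] :
    (⋃ x ∈ {x : α | IsMax x}, Iic x) = univ :=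
  eq_univ_of_forall fun a =>
    let ⟨_, hab, hb⟩ := Finite.exists_le_isMax a
    mem_biUnion hb hab

/-- The homotopy stays at `f` until time `1` and then jumps to `g`; the jump is continuous
because every open set containing `g x` also contains `f x`. -/
theorem ContinuousMap.Homotopic.of_specializes {X Y : Type*} [TopologicalSpace X]
    [TopologicalSpace Y] {f g : C(X, Y)} (h : ∀ x, f x ⤳ g x) : f.Homotopic g := by
  classical
  refine ⟨⟨⟨(Prod.fst ⁻¹' {(1 : unitInterval)}).piecewise (g ∘ Prod.snd) (f ∘ Prod.snd), ?_⟩,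
    fun x => ?_, fun x => ?_⟩⟩
  · exact (isClosed_singleton.preimage continuous_fst).continuous_piecewise_of_specializes
      (g.continuous.comp continuous_snd) (f.continuous.comp continuous_snd) fun p => h p.2
  · simp [piecewise]
  · simp [piecewise]

theorem Topology.IsLowerSet.of_isOpen_iff {α : Type*} [Preorder α] [TopologicalSpace α]
    (h : ∀ s : Set α, IsOpen s ↔ IsLowerSet s) : Topology.IsLowerSet α :=
  ⟨TopologicalSpace.ext (funext fun s => propext (h s))⟩

theorem Topology.IsLowerSet.contractibleIn_Iic {α : Type*} [Preorder α] [TopologicalSpace α]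
    [Topology.IsLowerSet α] (a : α) : ContractibleIn (Iic a) :=
  ⟨a, ContinuousMap.Homotopic.of_specializes fun x =>
    Topology.IsLowerSet.specializes_iff_le.mpr x.2⟩

theorem cat_le_of_iUnion_eq_univ {X ι : Type*} [TopologicalSpace X] [Finite ι]
    (U : ι → Set X) (hopen : ∀ i, IsOpen (U i)) (hcover : (⋃ i, U i) = univ)
    (hcontr : ∀ i, ContractibleIn (U i)) : cat X ≤ Nat.card ι := by
  let e := Finite.equivFin ι
  refine sInf_le ⟨Nat.card ι, ⟨U ∘ e.symm, fun i => hopen _, ?_, fun i => hcontr _⟩, rfl⟩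
  exact (e.symm.surjective.iUnion_comp U).trans hcover

/-- For a finite space `P`, `cat(P) ≤ #Max(P)`; in particular the prime ideals
at the maximal points form a contractible open cover of `P`. -/
theorem cat_le_card_max
    (P : Type) [PartialOrder P] [Finite P] [TopologicalSpace P]
    (hP : ∀ s : Set P, IsOpen s ↔ IsLowerSet s) :
    cat P ≤ (Nat.card {x : P // IsMax x} : ℕ∞) ∧
      (⋃ x ∈ {x : P | IsMax x}, Set.Iic x) = Set.univ ∧
      ∀ x : P, IsMax x → IsOpen (Set.Iic x) ∧ ContractibleIn (Set.Iic x) := by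
  have := Topology.IsLowerSet.of_isOpen_iff hP
  have hopen (x : P) : IsOpen (Iic x) := (hP _).mpr (isLowerSet_Iic x)
  have hcover := Finite.iUnion_Iic_isMax_eq_univ P
  refine ⟨?_, hcover, fun x _ => ⟨hopen x, IsLowerSet.contractibleIn_Iic x⟩⟩
  refine cat_le_of_iUnion_eq_univ (fun x : {x : P // IsMax x} => Iic x.1) (fun _ => hopen _) ?_
    fun _ => IsLowerSet.contractibleIn_Iic _
  rwa [iUnion_subtype]
end

section
/- For a path connected finite T₀ space P, TC(P) ≤ CC(P): any open cover of P × P admitting continuous sections of q_m : P^{J_m} → P × P yields, by composing with the map induced by the McCord-type surjection β : [0,1] → J_m, continuous sections of the path fibration p : P^I → P × P on the same open sets. -/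
open Set

/-!
Any path in the fence `J m` from `0` to `m` (McCord's map is one) induces, by precomposition, a
map `P^{J m} → P^I` over `P × P`, so every section of `q_m` over an open set yields a section of
the path fibration over the same set. Such a path exists because adjacent points of the fence are
comparable, and in the Alexandrov topology `a ≤ b` means that `a` specializes to `b`, which gives
the path that stays at `a` and jumps to `b` at time `1`.
-/

lemma alexTop_specializes_of_le {α : Type*} [Preorder α] {a b : α} (h : a ≤ b) :
    @Specializes α (alexTop α) a b :=
  (@specializes_iff_forall_open α (alexTop α) a b).2 fun _ hs hb => hs h hb

namespace J

lemma joined_of_le {m : ℕ} {i j : J m} (h : i ≤ j) : Joined i j :=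
  joinedIn_univ.mp ((alexTop_specializes_of_le h).joinedIn trivial trivial)

lemma joined_of_val_eq_succ {m : ℕ} {i j : J m} (h : j.val = i.val + 1) : Joined i j := by
  rcases Nat.even_or_odd i.val with hi | hi
  · exact joined_of_le (Or.inr ⟨by grind, Or.inl h⟩)
  · exact (joined_of_le (Or.inr ⟨by grind, Or.inr h⟩)).symm

lemma joined_zero {m : ℕ} (j : J m) : Joined zero j :=
  Fin.induction (Joined.refl _) (fun _ h => h.trans (joined_of_val_eq_succ rfl)) j

instance (m : ℕ) : PathConnectedSpace (J m) where
  nonempty := ⟨zero⟩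
  joined x y := (joined_zero x).symm.trans (joined_zero y)

end J

lemma hasTCCover_of_hasCCCover {P : Type*} [TopologicalSpace P] {m n : ℕ}
    (h : hasCCCover P m n) : hasTCCover P n := by
  obtain ⟨U, hU, hcov, hsec⟩ := h
  let γ : Path (J.zero : J m) J.last := PathConnectedSpace.somePath _ _
  refine ⟨U, hU, hcov, fun i => ?_⟩
  obtain ⟨s, hs⟩ := hsec i
  exact ⟨(ContinuousMap.compRightContinuousMap P γ.toContinuousMap).comp s, by simpa using hs⟩

lemma topComplexity_le_CCm (P : Type*) [TopologicalSpace P] (m : ℕ) :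
    topComplexity P ≤ CCm P m :=
  sInf_le_sInf (image_mono fun _ => hasTCCover_of_hasCCCover)

theorem TC_le_CC_general
    (P : Type) [TopologicalSpace P] :
    topComplexity P ≤ CC P :=
  le_iInf (topComplexity_le_CCm P)

/-- For a path connected finite space `P`, `TC(P) ≤ CC(P)`. -/
theorem TC_le_CC
    (P : Type) [PartialOrder P] [Finite P] [TopologicalSpace P] [PathConnectedSpace P]
    (hP : ∀ s : Set P, IsOpen s ↔ IsLowerSet s) :
    topComplexity P ≤ CC P :=
  TC_le_CC_general P
end

section
/- For any path connected finite T₀ space P, CC(P) ≤ cat*_P(P × P), the fiberwise unpointed LS-category of P × P regarded as a fiberwise pointed space over P via the second projection and the diagonal section. -/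
open Set

/-- `P × P` is covered by `n` open sets, each fiberwise compressible into the diagonal
section of the fiberwise pointed space `pr₂ : P × P → P`, `Δ : P → P × P`. -/
def hasCatStarCover (P : Type*) [TopologicalSpace P] (n : ℕ) : Prop :=
  ∃ U : Fin n → Set (P × P), (∀ i, IsOpen (U i)) ∧ (⋃ i, U i) = Set.univ ∧
    ∀ i, ∃ H : C(↥(U i) × unitInterval, P × P),
      (∀ x : U i, H (x, 0) = (x : P × P)) ∧
      (∀ x : U i, (H (x, 1)).1 = (H (x, 1)).2) ∧
      (∀ (x : U i) (t : unitInterval), (H (x, t)).2 = (x : P × P).2)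

/-- The fiberwise unpointed LS-category `cat*_P(P × P)` (unreduced version). -/
noncomputable def catStar (P : Type*) [TopologicalSpace P] : ℕ∞ :=
  sInf ((↑) '' {n : ℕ | hasCatStarCover P n})


/-!
A fiberwise compression of an open set `U ⊆ P × P` into the diagonal gives, on the first factor,
a homotopy from `pr₁` to `pr₂` on `U`. Between finite spaces the continuous maps are the monotone
ones, and `P^U` is again a finite space with the pointwise order, so the path `t ↦ H t` in `P^U`
is replaced by a finite chain of comparable maps `pr₁ = f₀ ≤ f₁ ≥ f₂ ≤ ⋯ = pr₂`. Such a chain is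
a monotone, hence continuous, map `U × J m → P`, that is a section of `q_m` over `U`; padding the
chain by constants makes one length `m` work for all the finitely many sets of the cover.
-/

open Filter

namespace Topology.IsLowerSet

variable {α β : Type*} [TopologicalSpace α] [Preorder α] [TopologicalSpace β] [Preorder β]

lemma of_specializes_iff_le [AlexandrovDiscrete α] (h : ∀ a b : α, a ⤳ b ↔ a ≤ b) :
    Topology.IsLowerSet α :=
  ⟨TopologicalSpace.ext <| funext fun s => propext <| by
    rw [isOpen_iff_forall_specializes]
    simp only [h]
    exact ⟨fun hs b a hab hb => hs a b hab hb, fun hs a b hab hb => hs hab hb⟩⟩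

instance prod [Topology.IsLowerSet α] [Topology.IsLowerSet β] : Topology.IsLowerSet (α × β) :=
  of_specializes_iff_le fun ⟨_, _⟩ ⟨_, _⟩ => by
    simp only [specializes_prod, specializes_iff_le, Prod.le_def]

instance subtype [Topology.IsLowerSet α] (p : α → Prop) : Topology.IsLowerSet (Subtype p) :=
  of_specializes_iff_le fun _ _ =>
    Topology.IsInducing.subtypeVal.specializes_iff.symm.trans specializes_iff_le

instance pi {ι : Type*} [Finite ι] {π : ι → Type*} [∀ i, TopologicalSpace (π i)]
    [∀ i, Preorder (π i)] [∀ i, Topology.IsLowerSet (π i)] : Topology.IsLowerSet (∀ i, π i) :=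
  of_specializes_iff_le fun _ _ => by
    simp only [specializes_pi, specializes_iff_le, Pi.le_def]

end Topology.IsLowerSet

instance (m : ℕ) : Topology.IsLowerSet (J m) := ⟨rfl⟩

lemma reflTransGen_comparable_of_continuous {T Y : Type*} [TopologicalSpace T]
    [PreconnectedSpace T] [TopologicalSpace Y] [Preorder Y] [Topology.IsLowerSet Y]
    {Φ : T → Y} (hΦ : Continuous Φ) (a b : T) :
    Relation.ReflTransGen (fun s t => Φ s ≤ Φ t ∨ Φ t ≤ Φ s) a b := by
  refine PreconnectedSpace.induction₂' _ (fun t => ?_) ⟨fun _ _ _ => .trans⟩ a b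
  have hIic : Iic (Φ t) ∈ nhds (Φ t) := by
    rw [Topology.IsLowerSet.nhds_eq_principal_Iic]
    exact mem_principal_self _
  filter_upwards [hΦ.continuousAt hIic] with s hs
  exact ⟨.single (Or.inr hs), .single (Or.inl hs)⟩

def IsZigzag {α : Type*} [Preorder α] (d : ℕ → α) : Prop :=
  ∀ q, d (2 * q) ≤ d (2 * q + 1) ∧ d (2 * q + 2) ≤ d (2 * q + 1)

lemma exists_isZigzag_of_reflTransGen {T α : Type*} [Preorder α] (f : T → α) {a b : T}
    (h : Relation.ReflTransGen (fun s t => f s ≤ f t ∨ f t ≤ f s) a b) :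
    ∃ d : ℕ → T, IsZigzag (f ∘ d) ∧ d 0 = a ∧ ∀ᶠ j in atTop, d j = b := by
  induction h using Relation.ReflTransGen.head_induction_on with
  | refl => exact ⟨fun _ => b, fun _ => ⟨le_rfl, le_rfl⟩, rfl, .of_forall fun _ => rfl⟩
  | @head a c hac _ ih =>
    obtain ⟨d, hd, hd0, hdb⟩ := ih
    obtain ⟨t, hat, hct⟩ : ∃ t, f a ≤ f t ∧ f c ≤ f t := by
      rcases hac with h | h
      exacts [⟨c, h, le_rfl⟩, ⟨a, le_rfl, h⟩]
    refine ⟨fun | 0 => a | 1 => t | j + 2 => d j, ?_, rfl, ?_⟩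
    · rintro (_ | q)
      · show f a ≤ f t ∧ f (d 0) ≤ f t
        exact ⟨hat, hd0 ▸ hct⟩
      · exact hd q
    · obtain ⟨N, hN⟩ := eventually_atTop.1 hdb
      refine eventually_atTop.2 ⟨N + 2, fun j hj => ?_⟩
      obtain ⟨k, rfl⟩ : ∃ k, j = k + 2 := ⟨j - 2, by omega⟩
      exact hN k (by omega)

lemma J.monotone_of_isZigzag {α : Type*} [Preorder α] {d : ℕ → α} (hd : IsZigzag d) (m : ℕ) :
    Monotone fun j : J m => d j.val := by
  rintro i j (h | ⟨hj, h | h⟩)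
  · exact (congrArg d h).le
  · obtain ⟨q, hq⟩ : ∃ q, i.val = 2 * q := ⟨i.val / 2, by omega⟩
    simpa only [h, hq] using (hd q).1
  · obtain ⟨q, hq⟩ : ∃ q, j.val = 2 * q + 1 := ⟨j.val / 2, by omega⟩
    simpa only [h, hq] using (hd q).2

theorem ContinuousMap.Homotopic.eventually_exists_fence {X Y : Type*} [TopologicalSpace X]
    [Preorder X] [Topology.IsLowerSet X] [Finite X] [TopologicalSpace Y] [Preorder Y]
    [Topology.IsLowerSet Y] {f g : C(X, Y)} (hfg : f.Homotopic g) :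
    ∀ᶠ m in atTop, ∃ F : C(X, C(J (2 * m), Y)),
      ∀ x, F x J.zero = f x ∧ F x J.last = g x := by
  obtain ⟨H⟩ := hfg
  have hΦ : Continuous fun t x => H (t, x) := continuous_pi fun x => by fun_prop
  obtain ⟨d, hd, hd0, hd1⟩ :=
    exists_isZigzag_of_reflTransGen _ (reflTransGen_comparable_of_continuous hΦ 0 1)
  obtain ⟨N, hN⟩ := eventually_atTop.1 hd1
  refine eventually_atTop.2 ⟨N, fun m hm => ?_⟩
  have hmono : Monotone fun p : X × J (2 * m) => H (d p.2.val, p.1) := by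
    rintro ⟨x, i⟩ ⟨y, j⟩ ⟨hxy, hij⟩
    calc H (d i.val, x) ≤ H (d i.val, y) :=
          Topology.IsLowerSet.monotone_iff_continuous.2 (H.curry _).continuous hxy
      _ ≤ H (d j.val, y) := J.monotone_of_isZigzag hd _ hij y
  refine ⟨ContinuousMap.curry ⟨_, Topology.IsLowerSet.monotone_iff_continuous.1 hmono⟩,
    fun x => ⟨?_, ?_⟩⟩
  · show H (d 0, x) = f x
    rw [hd0, H.apply_zero]
  · show H (d (2 * m), x) = g x
    rw [hN _ (by omega), H.apply_one]

lemma homotopic_fst_snd_of_fiberwise_compression {X : Type*} [TopologicalSpace X]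
    {U : Set (X × X)} (H : C(U × unitInterval, X × X)) (h0 : ∀ x : U, H (x, 0) = x)
    (h1 : ∀ x : U, (H (x, 1)).1 = (H (x, 1)).2) (h2 : ∀ x : U, (H (x, 1)).2 = (x : X × X).2) :
    (ContinuousMap.fst.restrict U).Homotopic (ContinuousMap.snd.restrict U) :=
  ⟨{ toFun := fun p => (H (p.2, p.1)).1
     map_zero_left := fun x => by simp [h0]
     map_one_left := fun x => (h1 x).trans (h2 x) }⟩

lemma hasCCCover_of_hasCatStarCover {P : Type*} [TopologicalSpace P] [Preorder P]
    [Topology.IsLowerSet P] [Finite P] {n : ℕ} (h : hasCatStarCover P n) :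
    ∃ m, hasCCCover P m n := by
  obtain ⟨U, hU, hcover, hH⟩ := h
  have hfence (i : Fin n) : ∀ᶠ m in atTop, ∃ s : C(U i, C(J (2 * m), P)),
      ∀ x : U i, s x J.zero = (x : P × P).1 ∧ s x J.last = (x : P × P).2 := by
    obtain ⟨H, h0, h1, h2⟩ := hH i
    exact (homotopic_fst_snd_of_fiberwise_compression H h0 h1 (h2 · 1)).eventually_exists_fence
  obtain ⟨m, hm⟩ := (eventually_all.2 hfence).exists
  exact ⟨2 * m, U, hU, hcover, hm⟩

theorem CC_le_catStar_general
    (P : Type) [PartialOrder P] [Finite P] [TopologicalSpace P]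
    (hP : ∀ s : Set P, IsOpen s ↔ IsLowerSet s) :
    CC P ≤ catStar P := by
  have : Topology.IsLowerSet P := ⟨TopologicalSpace.ext <| funext fun s => propext (hP s)⟩
  refine le_sInf ?_
  rintro _ ⟨n, hn, rfl⟩
  obtain ⟨m, hm⟩ := hasCCCover_of_hasCatStarCover hn
  exact (iInf_le _ m).trans (sInf_le ⟨n, hm, rfl⟩)

/-- For a path connected finite space `P`, `CC(P) ≤ cat*_P(P × P)`. -/
theorem CC_le_catStar
    (P : Type) [PartialOrder P] [Finite P] [TopologicalSpace P] [PathConnectedSpace P]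
    (hP : ∀ s : Set P, IsOpen s ↔ IsLowerSet s) :
    CC P ≤ catStar P :=
  CC_le_catStar_general P hP
end
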